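/- arXiv:2106.11672 — 6 statements merged into one kernel-verified Lean document; each statement's English description precedes it below -/
import Mathlib

section
/- For every natural number n ≥ 2 there exists a sequence of permutations π₀, π₁, …, π_{n−2} of Fin n with π₀ = id such that: (i) for each t < n−2 the permutation π_{t+1} ∘ π_t⁻¹ is a product of pairwise-disjoint transpositions, each of which exchanges two adjacent positions i and i+1; (ii) for every pair of distinct elements x ≠ y of Fin n there exists some t ≤ n−2 with |(π_t x : ℤ) − (π_t y : ℤ)| = 1; and (iii) the total number of transpositions used across all n−2 steps equals (n−1)(n−2)/2. (That is, the complete interaction graph can be simulated on a line of n qudits using n−2 layers of parallel nearest-neighbour swaps and (n−1)(n−2)/2 swaps in total.) -/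
/-!
Use the odd–even transposition ("brick-wall") network: layer `t` swaps the positions `p, p + 1`
with `p ≡ t [MOD 2]`. Under it every token moves like a billiard ball, one step per layer,
pausing for one layer at each end of the line; even tokens start moving right, odd ones left.
Hence the position of token `k` at time `t` is a `2n`-periodic zigzag evaluated at a phase
depending on `k` plus `t`, and a case analysis on the parities of two tokens gives an explicit
time `≤ n - 2` at which they are adjacent. Layer `t` performs `(n - t % 2) / 2` swaps, and two
consecutive layers together perform `n - 1`.
-/

open Finset

def brickwallStep (n t p : ℕ) : ℕ :=
  if p % 2 = t % 2 then (if p + 1 < n then p + 1 else p)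
  else (if p = 0 then p else p - 1)

lemma brickwallStep_lt {n p : ℕ} (t : ℕ) (hp : p < n) : brickwallStep n t p < n := by
  unfold brickwallStep; split_ifs <;> omega

lemma brickwallStep_brickwallStep {n p : ℕ} (t : ℕ) (hp : p < n) :
    brickwallStep n t (brickwallStep n t p) = p := by
  unfold brickwallStep; split_ifs <;> first | contradiction | omega

lemma brickwallStep_ne_iff {n p : ℕ} (t : ℕ) (hp : p < n) :
    brickwallStep n t p ≠ p ↔ t % 2 ≤ p ∧ p < t % 2 + 2 * ((n - t % 2) / 2) := by
  unfold brickwallStep; split_ifs <;> omega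

def brickwallLayer (n t : ℕ) : Equiv.Perm (Fin n) :=
  Function.Involutive.toPerm (fun p => ⟨brickwallStep n t p, brickwallStep_lt t p.isLt⟩)
    (fun p => Fin.ext (brickwallStep_brickwallStep t p.isLt))

lemma brickwallLayer_apply_val (n t : ℕ) (p : Fin n) :
    (brickwallLayer n t p : ℕ) = brickwallStep n t p := rfl

lemma brickwallLayer_mul_self (n t : ℕ) : brickwallLayer n t * brickwallLayer n t = 1 :=
  Equiv.ext fun p => Fin.ext (brickwallStep_brickwallStep t p.isLt)

lemma abs_brickwallLayer_apply_sub_le (n t : ℕ) (p : Fin n) :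
    |((brickwallLayer n t p : ℕ) : ℤ) - (p : ℕ)| ≤ 1 := by
  rw [brickwallLayer_apply_val, abs_le]
  unfold brickwallStep; split_ifs <;> omega

lemma card_support_brickwallLayer (n t : ℕ) :
    #(brickwallLayer n t).support = 2 * ((n - t % 2) / 2) := by
  have hmap : (brickwallLayer n t).support.map Fin.valEmbedding =
      Ico (t % 2) (t % 2 + 2 * ((n - t % 2) / 2)) := by
    ext p
    simp only [mem_map, Equiv.Perm.mem_support, Fin.valEmbedding_apply, mem_Ico]
    constructor
    · rintro ⟨p, hp, rfl⟩
      exact (brickwallStep_ne_iff t p.isLt).1 fun h => hp (Fin.ext h)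
    · intro hp
      have hpn : p < n := by omega
      exact ⟨⟨p, hpn⟩, fun h => (brickwallStep_ne_iff t hpn).2 hp (congrArg Fin.val h), rfl⟩
  rw [← card_map Fin.valEmbedding, hmap, Nat.card_Ico]
  omega

def brickwall (n : ℕ) : ℕ → Equiv.Perm (Fin n)
  | 0 => 1
  | t + 1 => brickwallLayer n t * brickwall n t

lemma brickwall_succ_mul_inv (n t : ℕ) :
    brickwall n (t + 1) * (brickwall n t)⁻¹ = brickwallLayer n t :=
  mul_inv_cancel_right _ _

/-- The position at time `x` of a token running `0, 1, …, n - 1, n - 1, n - 2, …, 0` and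
repeating. -/
def bounce (n x : ℕ) : ℕ := min (x % (2 * n)) (2 * n - 1 - x % (2 * n))

lemma bounce_of_lt {n x : ℕ} (h : x < 2 * n) : bounce n x = min x (2 * n - 1 - x) := by
  rw [bounce, Nat.mod_eq_of_lt h]

lemma bounce_add_two_mul (n x : ℕ) : bounce n (x + 2 * n) = bounce n x := by
  rw [bounce, bounce, Nat.add_mod_right]

lemma bounce_of_two_mul_le {n x : ℕ} (h₁ : 2 * n ≤ x) (h₂ : x < 4 * n) :
    bounce n x = min (x - 2 * n) (4 * n - 1 - x) := by
  obtain ⟨y, rfl⟩ := Nat.exists_eq_add_of_le' h₁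
  rw [bounce_add_two_mul, bounce_of_lt (by omega)]
  omega

lemma brickwallStep_bounce {n : ℕ} (hn : 0 < n) {t x : ℕ} (hx : x % 2 = t % 2) :
    brickwallStep n t (bounce n x) = bounce n (x + 1) := by
  induction x using Nat.strong_induction_on with
  | _ x ih =>
  rcases lt_or_ge x (2 * n) with hx2 | hx2
  · rw [bounce_of_lt hx2]
    rcases lt_or_ge (x + 1) (2 * n) with hx1 | hx1
    · rw [bounce_of_lt hx1]
      unfold brickwallStep; split_ifs <;> omega
    · rw [show x + 1 = 0 + 2 * n by omega, bounce_add_two_mul, bounce_of_lt (by omega)]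
      unfold brickwallStep; split_ifs <;> omega
  · obtain ⟨y, rfl⟩ := Nat.exists_eq_add_of_le' hx2
    rw [bounce_add_two_mul, add_right_comm, bounce_add_two_mul]
    exact ih y (by omega) (by omega)

/-- Token `k` starts at position `k`, moving right if `k` is even and left if `k` is odd. -/
def bouncePhase (n k : ℕ) : ℕ := if k % 2 = 0 then k else 2 * n - 1 - k

lemma bouncePhase_of_even {n k : ℕ} (hk : k % 2 = 0) : bouncePhase n k = k := if_pos hk

lemma bouncePhase_of_odd {n k : ℕ} (hk : k % 2 = 1) : bouncePhase n k = 2 * n - 1 - k :=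
  if_neg (by omega)

lemma brickwall_apply_val {n : ℕ} (t : ℕ) (k : Fin n) :
    (brickwall n t k : ℕ) = bounce n (bouncePhase n k + t) := by
  induction t with
  | zero =>
    have hk := k.isLt
    change (k : ℕ) = _
    rcases Nat.mod_two_eq_zero_or_one k with h | h
    · rw [bouncePhase_of_even h, add_zero, bounce_of_lt (by omega)]
      omega
    · rw [bouncePhase_of_odd h, add_zero, bounce_of_lt (by omega)]
      omega
  | succ t ih =>
    have hpar : (bouncePhase n k + t) % 2 = t % 2 := by
      unfold bouncePhase; split_ifs <;> omega
    change brickwallStep n t (brickwall n t k) = _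
    rw [ih, brickwallStep_bounce k.pos hpar, add_assoc]

lemma exists_bounce_adjacent {n u v : ℕ} (hv : v < n) (huv : u < v) :
    ∃ t ≤ n - 2, bounce n (bouncePhase n u + t) + 1 = bounce n (bouncePhase n v + t) := by
  rcases Nat.mod_two_eq_zero_or_one u with hu | hu <;>
    rcases Nat.mod_two_eq_zero_or_one v with hv' | hv'
  · -- both move right; `v` turns at the right end and meets `u` head-on
    refine ⟨n - 1 - (u + v) / 2, by omega, ?_⟩
    rw [bouncePhase_of_even hu, bouncePhase_of_even hv', bounce_of_lt (by omega),
      bounce_of_lt (by omega)]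
    omega
  · -- they approach each other from the start
    refine ⟨(v - u - 1) / 2, by omega, ?_⟩
    rw [bouncePhase_of_even hu, bouncePhase_of_odd hv', bounce_of_lt (by omega),
      bounce_of_lt (by omega)]
    omega
  · by_cases hvu : v = u + 1
    · refine ⟨0, by omega, ?_⟩
      rw [bouncePhase_of_odd hu, bouncePhase_of_even hv', bounce_of_lt (by omega),
        bounce_of_lt (by omega)]
      omega
    · -- `u` turns at the left end, `v` at the right end, and they meet head-on
      refine ⟨(2 * n - 1 + u - v) / 2, by omega, ?_⟩
      rw [bouncePhase_of_odd hu, bouncePhase_of_even hv', bounce_of_two_mul_le (by omega) (by omega),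
        bounce_of_lt (by omega)]
      omega
  · -- both move left; `u` turns at the left end and meets `v` head-on
    refine ⟨(u + v) / 2, by omega, ?_⟩
    rw [bouncePhase_of_odd hu, bouncePhase_of_odd hv', bounce_of_two_mul_le (by omega) (by omega),
      bounce_of_lt (by omega)]
    omega

lemma exists_brickwall_adjacent {n : ℕ} {x y : Fin n} (h : x < y) :
    ∃ t ≤ n - 2, (brickwall n t x : ℕ) + 1 = brickwall n t y := by
  simpa only [brickwall_apply_val] using exists_bounce_adjacent y.isLt h

lemma Finset.sum_range_mod_two {M : Type*} [AddCommMonoid M] (g : ℕ → M) (m : ℕ) :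
    ∑ t ∈ range m, g (t % 2) = ((m + 1) / 2) • g 0 + (m / 2) • g 1 := by
  induction m with
  | zero => simp
  | succ m ih =>
    rw [sum_range_succ, ih]
    rcases Nat.mod_two_eq_zero_or_one m with h | h
    · rw [h, show (m + 1 + 1) / 2 = (m + 1) / 2 + 1 by omega, show (m + 1) / 2 = m / 2 by omega,
        succ_nsmul]
      abel
    · rw [h, show (m + 1 + 1) / 2 = (m + 1) / 2 by omega, show (m + 1) / 2 = m / 2 + 1 by omega,
        succ_nsmul, succ_nsmul]
      abel

lemma sum_card_support_brickwallLayer (n : ℕ) :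
    ∑ t ∈ range (n - 2), #(brickwallLayer n t).support = (n - 1) * (n - 2) := by
  simp only [card_support_brickwallLayer]
  rcases lt_or_ge n 2 with h | h
  · simp [Nat.sub_eq_zero_of_le h.le]
  obtain ⟨m, rfl⟩ := Nat.exists_eq_add_of_le' h
  refine (sum_range_mod_two (fun s => 2 * ((m + 2 - s) / 2)) (m + 2 - 2)).trans ?_
  simp only [smul_eq_mul, Nat.add_sub_cancel, Nat.sub_zero, show m + 2 - 1 = m + 1 by omega]
  obtain ⟨k, rfl | rfl⟩ := Nat.even_or_odd' m
  · rw [show (2 * k + 1) / 2 = k by omega, show (2 * k + 2) / 2 = k + 1 by omega,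
      show 2 * k / 2 = k by omega]
    ring
  · rw [show (2 * k + 1 + 1) / 2 = k + 1 by omega, show (2 * k + 1 + 2) / 2 = k + 1 by omega,
      show (2 * k + 1) / 2 = k by omega]
    ring

theorem complete_graph_on_line_upper_bound_general (n : ℕ) :
    ∃ π : ℕ → Equiv.Perm (Fin n),
      π 0 = 1 ∧
      (∀ t < n - 2,
        (π (t + 1) * (π t)⁻¹) * (π (t + 1) * (π t)⁻¹) = 1 ∧
        ∀ p : Fin n,
          |((((π (t + 1) * (π t)⁻¹) p : Fin n) : ℕ) : ℤ) - ((p : ℕ) : ℤ)| ≤ 1) ∧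
      (∀ x y : Fin n, x ≠ y →
        ∃ t ≤ n - 2, |(((π t x : Fin n) : ℕ) : ℤ) - (((π t y : Fin n) : ℕ) : ℤ)| = 1) ∧
      (∑ t ∈ Finset.range (n - 2), (π (t + 1) * (π t)⁻¹).support.card
        = (n - 1) * (n - 2)) := by
  refine ⟨brickwall n, rfl, fun t _ => ?_, fun x y hxy => ?_, ?_⟩
  · rw [brickwall_succ_mul_inv]
    exact ⟨brickwallLayer_mul_self n t, abs_brickwallLayer_apply_sub_le n t⟩
  · rcases lt_or_gt_of_ne hxy with h | h
    · obtain ⟨t, ht, hadj⟩ := exists_brickwall_adjacent h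
      exact ⟨t, ht, by rw [← hadj]; push_cast; simp⟩
    · obtain ⟨t, ht, hadj⟩ := exists_brickwall_adjacent h
      exact ⟨t, ht, by rw [← hadj]; push_cast; simp⟩
  · simpa only [brickwall_succ_mul_inv] using sum_card_support_brickwallLayer n

/-- The complete interaction graph on `n` tokens can be simulated on a line of `n` qudits
using `n - 2` layers of parallel nearest-neighbour swaps, with `(n-1)(n-2)/2` swaps
(i.e. transpositions) in total. A layer is encoded by requiring that
`π (t+1) * (π t)⁻¹` is an involution moving every position by at most one, which is
equivalent to it being a product of pairwise-disjoint transpositions of adjacent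
positions; the total number of transpositions is half the total support, so the count
`(n-1)(n-2)/2` is stated as `∑ support.card = (n-1)*(n-2)`. -/
theorem complete_graph_on_line_upper_bound (n : ℕ) (hn : 2 ≤ n) :
    ∃ π : ℕ → Equiv.Perm (Fin n),
      π 0 = 1 ∧
      (∀ t < n - 2,
        (π (t + 1) * (π t)⁻¹) * (π (t + 1) * (π t)⁻¹) = 1 ∧
        ∀ p : Fin n,
          |((((π (t + 1) * (π t)⁻¹) p : Fin n) : ℕ) : ℤ) - ((p : ℕ) : ℤ)| ≤ 1) ∧
      (∀ x y : Fin n, x ≠ y →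
        ∃ t ≤ n - 2, |(((π t x : Fin n) : ℕ) : ℤ) - (((π t y : Fin n) : ℕ) : ℤ)| = 1) ∧
      (∑ t ∈ Finset.range (n - 2), (π (t + 1) * (π t)⁻¹).support.card
        = (n - 1) * (n - 2)) :=
  complete_graph_on_line_upper_bound_general n
end

section
/- Let n ≥ 2 and let π₀ = id, π₁, …, π_T be permutations of Fin n such that for each t < T there exist adjacent positions i, i+1 with π_{t+1} = (i i+1) ∘ π_t (each step performs a single nearest-neighbour swap). If for every pair of distinct tokens x ≠ y there exists some t ≤ T with |(π_t x : ℤ) − (π_t y : ℤ)| = 1, then 2·T ≥ n(n−1)/2 − (n−1). (Any swap protocol on a line of n qudits enabling all-to-all interactions requires at least (C(n,2) − (n−1))/2 swaps.) -/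
/-!
At time `t` the pairs of tokens sitting at adjacent positions are the edges of the path graph
pulled back along `π t`; there are `n - 1` of them. A swap of neighbouring positions `u`, `u + 1`
only creates the edges whose positions become `{u - 1, u}` or `{u + 1, u + 2}`, so after `T`
swaps at most `(n - 1) + 2T` distinct pairs have ever been adjacent, while all `n(n - 1)/2`
pairs have to be.
-/

open Finset SimpleGraph

theorem Finset.card_biUnion_range_succ_le {α : Type*} [DecidableEq α] (s : ℕ → Finset α)
    (T : ℕ) :
    #((range (T + 1)).biUnion s) ≤ #(s 0) + ∑ t ∈ range T, #(s (t + 1) \ s t) := by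
  induction T with
  | zero => simp
  | succ T ih =>
    have hsub : s (T + 1) ∪ (range (T + 1)).biUnion s ⊆
        (s (T + 1) \ s T) ∪ (range (T + 1)).biUnion s := by
      intro x hx
      by_cases hxT : x ∈ s T
      · exact mem_union_right _ (mem_biUnion.2 ⟨T, self_mem_range_succ T, hxT⟩)
      · rcases mem_union.1 hx with h | h
        · exact mem_union_left _ (mem_sdiff.2 ⟨h, hxT⟩)
        · exact mem_union_right _ h
    rw [range_add_one, biUnion_insert, sum_range_succ]
    calc _ ≤ #((s (T + 1) \ s T) ∪ (range (T + 1)).biUnion s) := card_le_card hsub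
      _ ≤ _ := card_union_le _ _
      _ ≤ _ := by omega

namespace SimpleGraph

variable {n : ℕ}

theorem pathGraph_adj_iff_abs_sub {u v : Fin n} :
    (pathGraph n).Adj u v ↔ |(u : ℤ) - (v : ℤ)| = 1 := by
  rw [pathGraph_adj, abs_eq zero_le_one]
  omega

/-- An edge of the path is determined by its lower end. -/
theorem card_edgeFinset_le_of_le_pathGraph {H : SimpleGraph (Fin n)} [Fintype H.edgeSet]
    (hH : H ≤ pathGraph n) (A : Finset ℕ) (hA : ∀ u v, H.Adj u v → min (u : ℕ) v ∈ A) :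
    #H.edgeFinset ≤ #A := by
  let lowerEnd : Sym2 (Fin n) → ℕ := Sym2.lift ⟨fun u v => min (u : ℕ) v, fun _ _ => min_comm _ _⟩
  refine card_le_card_of_injOn lowerEnd ?_ ?_
  · intro e he
    induction e using Sym2.ind with
    | h u v => exact hA u v (by simpa using he)
  · intro e he e' he'
    induction e using Sym2.ind with
    | h u v =>
    induction e' using Sym2.ind with
    | h u' v' =>
    have huv := pathGraph_adj.1 (hH (by simpa using he))
    have huv' := pathGraph_adj.1 (hH (by simpa using he'))
    simp only [lowerEnd, Sym2.lift_mk, Sym2.eq_iff, Fin.ext_iff]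
    omega

theorem card_edgeFinset_pathGraph_le [Fintype (pathGraph n).edgeSet] :
    #(pathGraph n).edgeFinset ≤ n - 1 :=
  (card_edgeFinset_le_of_le_pathGraph le_rfl (range (n - 1)) fun u v huv => by
    have := pathGraph_adj.1 huv
    simp only [mem_range]
    omega).trans (card_range _).le

/-- Transposing two neighbouring vertices `u`, `v` of the path breaks only the edges
`{u - 1, u}` and `{v, v + 1}`. -/
theorem card_edgeFinset_pathGraph_sdiff_comap_swap_le_two {u v : Fin n} (huv : (u : ℕ) + 1 = v)
    [Fintype (pathGraph n \ (pathGraph n).comap (Equiv.swap u v)).edgeSet] :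
    #(pathGraph n \ (pathGraph n).comap (Equiv.swap u v)).edgeFinset ≤ 2 := by
  refine (card_edgeFinset_le_of_le_pathGraph sdiff_le {(u : ℕ) - 1, (v : ℕ)} ?_).trans card_le_two
  intro a b hab
  simp only [sdiff_adj, comap_adj, pathGraph_adj, Equiv.swap_apply_def, apply_ite Fin.val,
    Fin.ext_iff] at hab
  simp only [mem_insert, mem_singleton]
  split_ifs at hab <;> omega

theorem card_edgeFinset_comap_sdiff_comap_le_two {u v : Fin n} (huv : (u : ℕ) + 1 = v)
    {σ σ' : Equiv.Perm (Fin n)} (hσ : σ' = Equiv.swap u v * σ)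
    [Fintype ((pathGraph n).comap σ' \ (pathGraph n).comap σ).edgeSet] :
    #((pathGraph n).comap σ' \ (pathGraph n).comap σ).edgeFinset ≤ 2 := by
  classical
  subst hσ
  have hcomap : (pathGraph n).comap (Equiv.swap u v * σ) \ (pathGraph n).comap σ =
      (pathGraph n \ (pathGraph n).comap (Equiv.swap u v)).comap (Equiv.swap u v * σ) := by
    ext a b
    simp
  calc _ = #(pathGraph n \ (pathGraph n).comap (Equiv.swap u v)).edgeFinset :=
        Iso.card_edgeFinset_eq (by rw [hcomap]; exact Iso.comap _ _)
    _ ≤ 2 := card_edgeFinset_pathGraph_sdiff_comap_swap_le_two huv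

end SimpleGraph

theorem line_swap_count_lower_bound_general (n T : ℕ)
    (π : ℕ → Equiv.Perm (Fin n))
    (hstep : ∀ t < T, ∃ i : ℕ, ∃ h : i + 1 < n,
      π (t + 1) = Equiv.swap (⟨i, Nat.lt_of_succ_lt h⟩ : Fin n) ⟨i + 1, h⟩ * π t)
    (hall : ∀ x y : Fin n, x ≠ y →
      ∃ t ≤ T, |(((π t x : Fin n) : ℕ) : ℤ) - (((π t y : Fin n) : ℕ) : ℤ)| = 1) :
    n * (n - 1) / 2 - (n - 1) ≤ 2 * T := by
  classical
  let G : ℕ → SimpleGraph (Fin n) := fun t => (pathGraph n).comap (π t)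
  have hcover : (⊤ : SimpleGraph (Fin n)).edgeFinset ⊆
      (range (T + 1)).biUnion fun t => (G t).edgeFinset := by
    intro e he
    induction e using Sym2.ind with
    | h x y =>
    obtain ⟨t, ht, hxy⟩ := hall x y (by simpa using he)
    exact mem_biUnion.2 ⟨t, mem_range.2 (Nat.lt_succ_of_le ht),
      by simpa [G, pathGraph_adj_iff_abs_sub] using hxy⟩
  have hinit : #(G 0).edgeFinset ≤ n - 1 :=
    (Iso.comap (π 0) _).card_edgeFinset_eq.trans_le card_edgeFinset_pathGraph_le
  have hnew : ∀ t ∈ range T, #((G (t + 1)).edgeFinset \ (G t).edgeFinset) ≤ 2 := by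
    intro t ht
    obtain ⟨i, _, hπ⟩ := hstep t (mem_range.1 ht)
    rw [← edgeFinset_sdiff]
    exact card_edgeFinset_comap_sdiff_comap_le_two rfl hπ
  have hcount : n * (n - 1) / 2 ≤ (n - 1) + 2 * T :=
    calc n * (n - 1) / 2 = #(⊤ : SimpleGraph (Fin n)).edgeFinset := by
          rw [card_edgeFinset_top_eq_card_choose_two, Fintype.card_fin, Nat.choose_two_right]
      _ ≤ #((range (T + 1)).biUnion fun t => (G t).edgeFinset) := card_le_card hcover
      _ ≤ #(G 0).edgeFinset + ∑ t ∈ range T, #((G (t + 1)).edgeFinset \ (G t).edgeFinset) :=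
          card_biUnion_range_succ_le _ T
      _ ≤ (n - 1) + ∑ _t ∈ range T, 2 := add_le_add hinit (sum_le_sum hnew)
      _ = (n - 1) + 2 * T := by rw [sum_const, card_range, smul_eq_mul, mul_comm]
  omega

/-- Any swap protocol on a line of `n` qudits (one nearest-neighbour swap per step)
that makes every pair of distinct tokens adjacent at some time `t ≤ T` requires
`2T ≥ n(n-1)/2 - (n-1)` swaps. -/
theorem line_swap_count_lower_bound (n T : ℕ) (hn : 2 ≤ n)
    (π : ℕ → Equiv.Perm (Fin n)) (h0 : π 0 = 1)
    (hstep : ∀ t < T, ∃ i : ℕ, ∃ h : i + 1 < n,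
      π (t + 1) = Equiv.swap (⟨i, Nat.lt_of_succ_lt h⟩ : Fin n) ⟨i + 1, h⟩ * π t)
    (hall : ∀ x y : Fin n, x ≠ y →
      ∃ t ≤ T, |(((π t x : Fin n) : ℕ) : ℤ) - (((π t y : Fin n) : ℕ) : ℤ)| = 1) :
    n * (n - 1) / 2 - (n - 1) ≤ 2 * T :=
  line_swap_count_lower_bound_general n T π hstep hall
end

section
/- Let n ≥ 2 and let π₀ = id, π₁, …, π_L be permutations of Fin n such that for each t < L the permutation π_{t+1} ∘ π_t⁻¹ is a product of pairwise-disjoint transpositions of adjacent positions (each step is one layer of parallel nearest-neighbour swaps). If for every pair of distinct tokens x ≠ y there exists some t ≤ L with |(π_t x : ℤ) − (π_t y : ℤ)| = 1, then 2·(L + 1) ≥ n, i.e. L ≥ n/2 − 1. (Any layered swap protocol on a line of n qudits enabling all-to-all interactions requires at least n/2 − 1 layers of swaps.) -/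
/-!
In a single configuration at most `n - 1` unordered pairs of tokens sit at adjacent
positions, while every one of the `n(n-1)/2` pairs must be adjacent in one of the `L + 1`
configurations; hence `n(n-1)/2 ≤ (L+1)(n-1)`.
-/

open Finset

variable {α : Type*} [Fintype α] {n : ℕ}

def adjacentPairs (f : α → Fin n) : Finset (α × α) :=
  univ.filter fun p => |((f p.1 : ℕ) : ℤ) - ((f p.2 : ℕ) : ℤ)| = 1

theorem Nat.eq_add_one_or_eq_add_one_of_abs_sub_eq_one {a b : ℕ} (h : |(a : ℤ) - b| = 1) :
    a = b + 1 ∨ b = a + 1 := by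
  grind

/-- An adjacent pair is determined by its smaller position, one of `n - 1`, and by whether
its first token sits there. -/
theorem card_adjacentPairs_le {f : α → Fin n} (hf : Function.Injective f) :
    #(adjacentPairs f) ≤ 2 * (n - 1) := by
  classical
  let code : α × α → ℕ × Bool := fun p =>
    (min (f p.1 : ℕ) (f p.2), decide ((f p.1 : ℕ) < f p.2))
  have hmaps : ∀ p ∈ adjacentPairs f, code p ∈ range (n - 1) ×ˢ univ := by
    intro p hp
    have hadj := Nat.eq_add_one_or_eq_add_one_of_abs_sub_eq_one (mem_filter.mp hp).2
    have := (f p.1).isLt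
    have := (f p.2).isLt
    simp only [code, mem_product, mem_range, mem_univ, and_true]
    omega
  have hinj : Set.InjOn code (adjacentPairs f) := by
    intro p hp q hq hpq
    have hadj_p := Nat.eq_add_one_or_eq_add_one_of_abs_sub_eq_one (mem_filter.mp hp).2
    have hadj_q := Nat.eq_add_one_or_eq_add_one_of_abs_sub_eq_one (mem_filter.mp hq).2
    simp only [code, Prod.mk.injEq, decide_eq_decide] at hpq
    have h1 : f p.1 = f q.1 := Fin.ext (by omega)
    have h2 : f p.2 = f q.2 := Fin.ext (by omega)
    exact Prod.ext (hf h1) (hf h2)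
  calc #(adjacentPairs f) ≤ #(range (n - 1) ×ˢ (univ : Finset Bool)) :=
        card_le_card_of_injOn code hmaps hinj
    _ = 2 * (n - 1) := by simp [mul_comm]

theorem self_mul_pred_le_of_forall_adjacent (L : ℕ) (π : ℕ → Equiv.Perm (Fin n))
    (hall : ∀ x y : Fin n, x ≠ y →
      ∃ t ≤ L, |(((π t x : Fin n) : ℕ) : ℤ) - (((π t y : Fin n) : ℕ) : ℤ)| = 1) :
    n * (n - 1) ≤ 2 * (L + 1) * (n - 1) := by
  classical
  have hcover : (univ : Finset (Fin n)).offDiag ⊆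
      (range (L + 1)).biUnion fun t => adjacentPairs (π t) := by
    intro p hp
    obtain ⟨t, ht, hadj⟩ := hall p.1 p.2 (mem_offDiag.mp hp).2.2
    exact mem_biUnion.mpr ⟨t, mem_range.mpr (Nat.lt_succ_of_le ht), mem_filter.mpr ⟨mem_univ _, hadj⟩⟩
  calc n * (n - 1) = #(univ : Finset (Fin n)).offDiag := by
        rw [offDiag_card, card_univ, Fintype.card_fin, Nat.mul_sub_one]
    _ ≤ ∑ t ∈ range (L + 1), #(adjacentPairs (π t)) := (card_le_card hcover).trans card_biUnion_le
    _ ≤ ∑ _t ∈ range (L + 1), 2 * (n - 1) :=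
        sum_le_sum fun t _ => card_adjacentPairs_le (π t).injective
    _ = 2 * (L + 1) * (n - 1) := by rw [sum_const, card_range, smul_eq_mul]; ring

theorem line_swap_layers_lower_bound_general (n L : ℕ)
    (π : ℕ → Equiv.Perm (Fin n))
    (hall : ∀ x y : Fin n, x ≠ y →
      ∃ t ≤ L, |(((π t x : Fin n) : ℕ) : ℤ) - (((π t y : Fin n) : ℕ) : ℤ)| = 1) :
    n ≤ 2 * (L + 1) := by
  rcases Nat.lt_or_ge n 2 with hn | hn
  · omega
  · exact Nat.le_of_mul_le_mul_right (self_mul_pred_le_of_forall_adjacent L π hall) (by omega)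

/-- Any layered swap protocol on a line of `n` qudits (each layer a product of
pairwise-disjoint nearest-neighbour transpositions, encoded as an involution moving
every position by at most one) that makes every pair of distinct tokens adjacent at
some time `t ≤ L` requires `2(L+1) ≥ n`, i.e. at least `n/2 - 1` layers. -/
theorem line_swap_layers_lower_bound (n L : ℕ) (hn : 2 ≤ n)
    (π : ℕ → Equiv.Perm (Fin n)) (h0 : π 0 = 1)
    (hstep : ∀ t < L,
      (π (t + 1) * (π t)⁻¹) * (π (t + 1) * (π t)⁻¹) = 1 ∧
      ∀ p : Fin n,
        |((((π (t + 1) * (π t)⁻¹) p : Fin n) : ℕ) : ℤ) - ((p : ℕ) : ℤ)| ≤ 1)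
    (hall : ∀ x y : Fin n, x ≠ y →
      ∃ t ≤ L, |(((π t x : Fin n) : ℕ) : ℤ) - (((π t y : Fin n) : ℕ) : ℤ)| = 1) :
    n ≤ 2 * (L + 1) :=
  line_swap_layers_lower_bound_general n L π hall
end

section
/- Let d ≥ 1 and γ ∈ ℝ. For each ℓ ∈ Fin d define the diagonal d²×d² matrices D¹_ℓ and D²_ℓ, indexed by Fin d × Fin d, by: the (a,b) diagonal entry of D¹_ℓ is e^{iγ/2} if a = ℓ and b ≠ ℓ, and 1 otherwise; the (a,b) diagonal entry of D²_ℓ is e^{iγ/2} if b = ℓ and a ≠ ℓ, and 1 otherwise. Then the product ∏_{ℓ=0}^{d−1} D¹_ℓ D²_ℓ is the diagonal matrix whose (a,b) diagonal entry is e^{iγ} if a ≠ b and 1 if a = b. (The manifestly symmetric construction CP(γ) = ∏_ℓ 𝒰^{(1|2)}_ℓ 𝒰^{(2|1)}_ℓ realizes the two-qudit controlled-phase gate, up to a global phase e^{iγ}.) -/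
/-! All factors are diagonal, so the product is computed entrywise. A state `(a, b)` with
`a ≠ b` picks up the half phase `e^{iγ/2}` exactly twice, from `𝒰^{(1|2)}_a` and from
`𝒰^{(2|1)}_b`; a state `(a, a)` never picks it up. -/

open Complex

/-- The diagonal two-qudit unitary `𝒰^{(1|2)}_ℓ`: it imprints the phase `e^{iγ/2}`
exactly on basis states `(a, b)` with target level `a = ℓ` and control level `b ≠ ℓ`. -/
noncomputable def Ugate1 (d : ℕ) (γ : ℝ) (ℓ : Fin d) :
    Matrix (Fin d × Fin d) (Fin d × Fin d) ℂ :=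
  Matrix.diagonal fun p : Fin d × Fin d =>
    if p.1 = ℓ ∧ p.2 ≠ ℓ then Complex.exp (Complex.I * (γ / 2)) else 1

/-- The diagonal two-qudit unitary `𝒰^{(2|1)}_ℓ`: it imprints the phase `e^{iγ/2}`
exactly on basis states `(a, b)` with `b = ℓ` and `a ≠ ℓ`. -/
noncomputable def Ugate2 (d : ℕ) (γ : ℝ) (ℓ : Fin d) :
    Matrix (Fin d × Fin d) (Fin d × Fin d) ℂ :=
  Matrix.diagonal fun p : Fin d × Fin d =>
    if p.2 = ℓ ∧ p.1 ≠ ℓ then Complex.exp (Complex.I * (γ / 2)) else 1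

theorem Matrix.list_prod_map_diagonal {ι n α : Type*} [Fintype n] [DecidableEq n]
    [Semiring α] (l : List ι) (f : ι → n → α) :
    (l.map fun i => diagonal (f i)).prod = diagonal (l.map f).prod := by
  simpa [Function.comp_def] using (map_list_prod (diagonalRingHom n α) (l.map f)).symm

theorem Finset.prod_ite_eq_and_ne {ι M : Type*} [Fintype ι] [DecidableEq ι] [CommMonoid M]
    (a b : ι) (z : M) :
    (∏ i, if a = i ∧ b ≠ i then z else 1) = if a ≠ b then z else 1 := by
  by_cases hab : a = b
  · simp [hab]
  · have hcond : ∀ i, (a = i ∧ b ≠ i) ↔ a = i := fun i =>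
      ⟨And.left, fun hai => ⟨hai, hai ▸ Ne.symm hab⟩⟩
    simp [hcond, hab]

theorem Ugate1_mul_Ugate2 (d : ℕ) (γ : ℝ) (ℓ : Fin d) :
    Ugate1 d γ ℓ * Ugate2 d γ ℓ = Matrix.diagonal fun p : Fin d × Fin d =>
      (if p.1 = ℓ ∧ p.2 ≠ ℓ then exp (I * (γ / 2)) else 1) *
        (if p.2 = ℓ ∧ p.1 ≠ ℓ then exp (I * (γ / 2)) else 1) :=
  Matrix.diagonal_mul_diagonal _ _

theorem controlled_phase_symmetric_construction_general (d : ℕ) (γ : ℝ) :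
    ((List.finRange d).map (fun ℓ => Ugate1 d γ ℓ * Ugate2 d γ ℓ)).prod
      = Matrix.diagonal (fun p : Fin d × Fin d =>
          if p.1 ≠ p.2 then Complex.exp (Complex.I * γ) else 1) := by
  simp_rw [Ugate1_mul_Ugate2, Matrix.list_prod_map_diagonal, ← Fin.prod_univ_def]
  congr 1
  ext ⟨a, b⟩
  rw [Finset.prod_apply, Finset.prod_mul_distrib, Finset.prod_ite_eq_and_ne,
    Finset.prod_ite_eq_and_ne]
  by_cases hab : a = b
  · simp [hab]
  · have half_phases : exp (I * (γ / 2)) * exp (I * (γ / 2)) = exp (I * γ) := by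
      rw [← exp_add]; ring_nf
    simp [hab, Ne.symm hab, half_phases]

/-- The manifestly symmetric construction `CP(γ) = ∏_{ℓ=0}^{d-1} 𝒰^{(1|2)}_ℓ 𝒰^{(2|1)}_ℓ`
realizes the two-qudit controlled-phase gate up to the global phase `e^{iγ}`: the
product is diagonal with entry `e^{iγ}` on unequal-level states and `1` on
equal-level states. -/
theorem controlled_phase_symmetric_construction (d : ℕ) (hd : 1 ≤ d) (γ : ℝ) :
    ((List.finRange d).map (fun ℓ => Ugate1 d γ ℓ * Ugate2 d γ ℓ)).prod
      = Matrix.diagonal (fun p : Fin d × Fin d =>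
          if p.1 ≠ p.2 then Complex.exp (Complex.I * γ) else 1) :=
  controlled_phase_symmetric_construction_general d γ
end

section
/- Let d ≥ 2. For each ℓ ∈ {0, 1, …, d−2} define g_ℓ : Fin d × Fin d → Fin d × Fin d by g_ℓ(a, b) = (σ_ℓ a, b) if b ≠ ℓ and g_ℓ(a, b) = (a, b) if b = ℓ, where σ_ℓ is the transposition of Fin d exchanging ℓ and ℓ+1. Let G = g_0 ∘ g_1 ∘ ⋯ ∘ g_{d−2}. Then for all (a, b) ∈ Fin d × Fin d, the first component of G(a, b) equals 0 if and only if a = b. (This is the combinatorial core of the controlled-phase construction CP(γ) = [∏_ℓ CX^{(1|2)}_{ℓ,ℓ+1|¬ℓ}]† P^{(1)}_{aux,0}(γ) [∏_ℓ CX^{(1|2)}_{ℓ,ℓ+1|¬ℓ}]: the ladder of negated-control CX gates maps exactly the equal-level basis states |ℓ⟩|ℓ⟩ onto states whose target qudit is in level 0, so that a single phase gate on level 0 of the target imprints the phase precisely on equal-level states.) -/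
/-!
Every gate `g_ℓ` is an involution that leaves the control level unchanged, so the ladder
`G = g_0 ∘ ⋯ ∘ g_{d-2}` is injective and fixes the control. On the diagonal label `(b, b)`
the gates `g_{d-2}, …, g_{b+1}` act trivially (their swaps miss `b`), `g_b` is switched off by
the control, and `g_{b-1}, …, g_0` move the target down one level at a time, so `G (b, b) = (0, b)`.
Hence `G (a, b)` has target `0` iff `G (a, b) = G (b, b)` iff `a = b`.
-/

open Function

section NegCtrlSwap

variable {α : Type*} [DecidableEq α]

/-- The gate `CX^{(1|2)}_{x,y|¬c}` on basis labels (target first, control second). -/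
def negCtrlSwap (c x y : α) (p : α × α) : α × α :=
  if p.2 = c then p else (Equiv.swap x y p.1, p.2)

lemma negCtrlSwap_of_snd_eq {c x y : α} {p : α × α} (h : p.2 = c) : negCtrlSwap c x y p = p :=
  if_pos h

lemma negCtrlSwap_of_ne {c x y b : α} (a : α) (h : b ≠ c) :
    negCtrlSwap c x y (a, b) = (Equiv.swap x y a, b) :=
  if_neg h

@[simp]
lemma negCtrlSwap_snd (c x y : α) (p : α × α) : (negCtrlSwap c x y p).2 = p.2 := by
  unfold negCtrlSwap
  split_ifs <;> rfl

lemma negCtrlSwap_involutive (c x y : α) : Involutive (negCtrlSwap c x y) := by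
  rintro ⟨a, b⟩
  by_cases hb : b = c
  · rw [negCtrlSwap_of_snd_eq (p := (a, b)) hb, negCtrlSwap_of_snd_eq hb]
  · rw [negCtrlSwap_of_ne _ hb, negCtrlSwap_of_ne _ hb, Equiv.swap_apply_self]

end NegCtrlSwap

section Ladder

variable {β : Type*}

/-- The ladder `g 0 ∘ g 1 ∘ ⋯ ∘ g (n - 1)`. -/
def ladder (g : ℕ → β → β) (n : ℕ) : β → β :=
  (List.range n).foldr (fun ℓ acc => g ℓ ∘ acc) id

lemma foldr_comp_eq_comp (g : ℕ → β → β) (l : List ℕ) (f : β → β) :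
    l.foldr (fun ℓ acc => g ℓ ∘ acc) f = l.foldr (fun ℓ acc => g ℓ ∘ acc) id ∘ f := by
  induction l with
  | nil => rfl
  | cons ℓ l ih => simp only [List.foldr_cons, ih, comp_assoc]

lemma ladder_succ (g : ℕ → β → β) (n : ℕ) : ladder g (n + 1) = ladder g n ∘ g n := by
  rw [ladder, List.range_succ, List.foldr_append, List.foldr_cons, List.foldr_nil,
    foldr_comp_eq_comp]
  rfl

lemma ladder_injective {g : ℕ → β → β} {n : ℕ} (hg : ∀ ℓ < n, Injective (g ℓ)) :
    Injective (ladder g n) := by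
  induction n with
  | zero => exact injective_id
  | succ n ih =>
    rw [ladder_succ]
    exact (ih fun ℓ hℓ => hg ℓ (by omega)).comp (hg n (by omega))

lemma ladder_snd {γ δ : Type*} {g : ℕ → γ × δ → γ × δ} {n : ℕ}
    (hg : ∀ ℓ < n, ∀ p, (g ℓ p).2 = p.2) (p : γ × δ) : (ladder g n p).2 = p.2 := by
  induction n generalizing p with
  | zero => rfl
  | succ n ih =>
    rw [ladder_succ, comp_apply, ih (fun ℓ hℓ => hg ℓ (by omega)), hg n (by omega)]

end Ladder

section CXLadder

variable {d : ℕ} {g : ℕ → Fin d × Fin d → Fin d × Fin d}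

lemma cxLadder_apply_mk_of_le
    (hg : ∀ ℓ (h : ℓ + 1 < d), g ℓ = negCtrlSwap ⟨ℓ, by omega⟩ ⟨ℓ, by omega⟩ ⟨ℓ + 1, h⟩)
    (b : Fin d) {k : ℕ} (hk : k ≤ b) :
    ladder g k (⟨k, hk.trans_lt b.isLt⟩, b) = (⟨0, b.pos⟩, b) := by
  induction k with
  | zero => rfl
  | succ k ih =>
    have hbk : b ≠ ⟨k, by omega⟩ := fun h => by simp [h] at hk
    rw [ladder_succ, comp_apply, hg k (hk.trans_lt b.isLt), negCtrlSwap_of_ne _ hbk,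
      Equiv.swap_apply_right, ih (by omega)]

lemma cxLadder_apply_diag
    (hg : ∀ ℓ (h : ℓ + 1 < d), g ℓ = negCtrlSwap ⟨ℓ, by omega⟩ ⟨ℓ, by omega⟩ ⟨ℓ + 1, h⟩)
    (b : Fin d) {n : ℕ} (hbn : b ≤ n) (hn : n < d) : ladder g n (b, b) = (⟨0, b.pos⟩, b) := by
  induction n, hbn using Nat.le_induction with
  | base => exact cxLadder_apply_mk_of_le hg b le_rfl
  | succ n hbn ih =>
    have hfix : g n (b, b) = (b, b) := by
      rw [hg n hn]
      by_cases hb : b = ⟨n, by omega⟩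
      · exact negCtrlSwap_of_snd_eq hb
      · rw [negCtrlSwap_of_ne _ hb, Equiv.swap_apply_of_ne_of_ne hb (fun h => by simp [h] at hbn)]
    rw [ladder_succ, comp_apply, hfix, ih (by omega)]

end CXLadder

/-- The combinatorial core of the controlled-phase construction
`CP(γ) = [∏_ℓ CX^{(1|2)}_{ℓ,ℓ+1|¬ℓ}]† P^{(1)}_{aux,0}(γ) [∏_ℓ CX^{(1|2)}_{ℓ,ℓ+1|¬ℓ}]`:
the ladder `G = g_0 ∘ g_1 ∘ ⋯ ∘ g_{d-2}` of negated-control CX maps (where `g_ℓ`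
swaps target levels `ℓ` and `ℓ+1` when the control level differs from `ℓ`) sends a
basis label `(a, b)` to one with target level `0` if and only if `a = b`. -/
theorem CX_ladder_maps_equal_levels_to_zero (d : ℕ) (hd : 2 ≤ d)
    (g : ℕ → Fin d × Fin d → Fin d × Fin d)
    (hg : ∀ (ℓ : ℕ) (h : ℓ + 1 < d) (p : Fin d × Fin d),
      g ℓ p =
        if p.2 = (⟨ℓ, Nat.lt_of_succ_lt h⟩ : Fin d) then p
        else (Equiv.swap (⟨ℓ, Nat.lt_of_succ_lt h⟩ : Fin d) ⟨ℓ + 1, h⟩ p.1, p.2)) :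
    ∀ p : Fin d × Fin d,
      (((List.range (d - 1)).foldr (fun ℓ acc => g ℓ ∘ acc) id) p).1
          = (⟨0, by omega⟩ : Fin d)
        ↔ p.1 = p.2 := by
  have hstep : ∀ ℓ (h : ℓ + 1 < d), g ℓ = negCtrlSwap ⟨ℓ, by omega⟩ ⟨ℓ, by omega⟩ ⟨ℓ + 1, h⟩ :=
    fun ℓ h => funext (hg ℓ h)
  have hinj : Injective (ladder g (d - 1)) := ladder_injective fun ℓ hℓ => by
    rw [hstep ℓ (by omega)]
    exact (negCtrlSwap_involutive _ _ _).injective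
  have hsnd : ∀ p, (ladder g (d - 1) p).2 = p.2 := ladder_snd fun ℓ hℓ p => by
    rw [hstep ℓ (by omega), negCtrlSwap_snd]
  rintro ⟨a, b⟩
  have hdiag : ladder g (d - 1) (b, b) = (⟨0, b.pos⟩, b) :=
    cxLadder_apply_diag hstep b (by omega) (by omega)
  change (ladder g (d - 1) (a, b)).1 = ⟨0, b.pos⟩ ↔ a = b
  constructor
  · intro h0
    have : ladder g (d - 1) (a, b) = ladder g (d - 1) (b, b) := by
      rw [hdiag]
      exact Prod.ext h0 (hsnd _)
    exact congrArg Prod.fst (hinj this)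
  · rintro rfl
    rw [hdiag]
end

section
/- Let Ω₀, Ω₁ ∈ ℂ, not both zero, set Ω = √(|Ω₀|² + |Ω₁|²), a = (|Ω₀|² − |Ω₁|²)/Ω², b = 2 Ω₀ (conj Ω₁)/Ω², and let H be the 3×3 complex matrix !![0, 0, Ω₀; 0, 0, Ω₁; conj Ω₀, conj Ω₁, 0]. Then for every positive integer m and t = (2m − 1)π/Ω, the matrix exponential satisfies exp(−(i t) • H) = −!![a, b, 0; conj b, −a, 0; 0, 0, 1]. (For a resonantly driven Λ-system with both legs coupled to a common Rydberg state, pulses of duration t = π(2m−1)/Ω return all population from the Rydberg state and implement the unitary U^{3-level}(θ, φ) with cos(θ/2) = (|Ω₀|²−|Ω₁|²)/Ω² and sin(θ/2)e^{iφ} = 2Ω₀Ω₁*/Ω².) -/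
/-!
Write `H` for the Hamiltonian. It satisfies `H³ = Ω² H`, so `A = H / Ω` has `A³ = A` and splits as
`A = P - M`, where `P = (A² + A)/2` and `M = (A² - A)/2` are orthogonal idempotents. Hence
`exp (θ A) = 1 + sinh θ • A + (cosh θ - 1) • A²`. At `θ = -i t Ω = -(2m - 1)πi` this is `1 - 2 A²`,
and `H²` has the entries `Ωᵢ Ω̄ⱼ` in the qudit block and `Ω²` at the Rydberg state.
-/

open NormedSpace ComplexConjugate Real

section BanachAlgebra

variable {𝔸 : Type*} [NormedRing 𝔸] [NormedAlgebra ℂ 𝔸] [CompleteSpace 𝔸]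

theorem IsIdempotentElem.exp_smul {E : 𝔸} (hE : IsIdempotentElem E) (θ : ℂ) :
    exp (θ • E) = 1 + (Complex.exp θ - 1) • E := by
  have hpow (n : ℕ) : (θ • E) ^ n = θ ^ n • E + (0 : ℂ) ^ n • (1 - E) := by
    cases n with
    | zero => simp
    | succ n => simp [smul_pow, hE.pow_succ_eq]
  have hsum (z : ℂ) : HasSum (fun n : ℕ => (n.factorial⁻¹ : ℂ) • z ^ n) (Complex.exp z) := by
    rw [Complex.exp_eq_exp_ℂ]
    exact exp_series_hasSum_exp' z
  have hsplit := ((hsum θ).smul_const E).add ((hsum 0).smul_const (1 - E))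
  rw [Complex.exp_zero, one_smul] at hsplit
  refine (exp_series_hasSum_exp' (𝕂 := ℂ) (θ • E)).unique ?_
  convert hsplit using 1
  · ext n
    rw [hpow, smul_add, smul_smul, smul_smul, smul_eq_mul, smul_eq_mul]
  · module

theorem exp_smul_add_smul_of_mul_eq_zero {P M : 𝔸} (hP : IsIdempotentElem P)
    (hM : IsIdempotentElem M) (hPM : P * M = 0) (hMP : M * P = 0) (α β : ℂ) :
    exp (α • P + β • M) = 1 + (Complex.exp α - 1) • P + (Complex.exp β - 1) • M := by
  let +nondep : NormedAlgebra ℚ 𝔸 := .restrictScalars ℚ ℂ 𝔸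
  have hcomm : Commute (α • P) (β • M) := by
    rw [Commute, SemiconjBy, smul_mul_smul, smul_mul_smul, hPM, hMP, smul_zero, smul_zero]
  rw [exp_add_of_commute hcomm, hP.exp_smul, hM.exp_smul]
  simp only [mul_add, add_mul, one_mul, mul_one, smul_mul_smul, hPM, smul_zero, add_zero]

theorem exp_smul_of_pow_three_eq_self {A : 𝔸} (hA : A ^ 3 = A) (θ : ℂ) :
    exp (θ • A) = 1 + Complex.sinh θ • A + (Complex.cosh θ - 1) • A ^ 2 := by
  have hA4 : A ^ 2 * A ^ 2 = A ^ 2 := by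
    rw [← pow_add, show 2 + 2 = 3 + 1 by rfl, pow_succ, hA, sq]
  have hA21 : A ^ 2 * A = A := by rw [← pow_succ, hA]
  have hA12 : A * A ^ 2 = A := by rw [← pow_succ', hA]
  have hAA : A * A = A ^ 2 := (sq A).symm
  have hsplit :
      θ • A = θ • ((2⁻¹ : ℂ) • (A ^ 2 + A)) + (-θ) • ((2⁻¹ : ℂ) • (A ^ 2 - A)) := by
    module
  rw [hsplit, exp_smul_add_smul_of_mul_eq_zero, Complex.sinh, Complex.cosh]
  · module
  all_goals
    simp only [IsIdempotentElem, smul_mul_smul, mul_add, add_mul, mul_sub, sub_mul,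
      hA4, hA21, hA12, hAA]
    module

theorem exp_smul_of_pow_three_eq_sq_smul {A : 𝔸} {c : ℂ} (hc : c ≠ 0)
    (hA : A ^ 3 = c ^ 2 • A) (θ : ℂ) :
    exp (θ • A) =
      1 + (Complex.sinh (θ * c) / c) • A + ((Complex.cosh (θ * c) - 1) / c ^ 2) • A ^ 2 := by
  have hA' : (c⁻¹ • A) ^ 3 = c⁻¹ • A := by
    rw [smul_pow, hA, smul_smul]
    congr 1
    field_simp
  rw [show θ • A = (θ * c) • (c⁻¹ • A) by rw [smul_smul, mul_assoc, mul_inv_cancel₀ hc, mul_one],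
    exp_smul_of_pow_three_eq_self hA', smul_pow, smul_smul, smul_smul]
  simp only [div_eq_mul_inv, inv_pow]

end BanachAlgebra

def lambdaHamiltonian (u v : ℂ) : Matrix (Fin 3) (Fin 3) ℂ :=
  !![0, 0, u; 0, 0, v; conj u, conj v, 0]

theorem lambdaHamiltonian_sq (u v : ℂ) :
    lambdaHamiltonian u v ^ 2 =
      !![(‖u‖ : ℂ) ^ 2, u * conj v, 0; v * conj u, (‖v‖ : ℂ) ^ 2, 0;
        0, 0, (‖u‖ : ℂ) ^ 2 + (‖v‖ : ℂ) ^ 2] := by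
  rw [sq, lambdaHamiltonian, Matrix.mul_fin_three]
  simp [Complex.mul_conj', Complex.conj_mul']

theorem lambdaHamiltonian_pow_three (u v : ℂ) :
    lambdaHamiltonian u v ^ 3 = ((‖u‖ : ℂ) ^ 2 + (‖v‖ : ℂ) ^ 2) • lambdaHamiltonian u v := by
  rw [pow_succ, lambdaHamiltonian_sq, lambdaHamiltonian, Matrix.mul_fin_three, Matrix.smul_of,
    ← Complex.mul_conj', ← Complex.mul_conj']
  ext i j
  fin_cases i <;> fin_cases j <;> simp <;> ring

theorem Real.cos_two_mul_sub_one_mul_pi (n : ℤ) : cos ((2 * n - 1) * π) = -1 := by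
  rw [← Real.cos_int_mul_two_pi_sub_pi n]
  ring_nf

theorem Real.sin_two_mul_sub_one_mul_pi (n : ℤ) : sin ((2 * n - 1) * π) = 0 := by
  exact_mod_cast Real.sin_int_mul_pi (2 * n - 1)

theorem lambda_system_resonant_evolution_general (Ω₀ Ω₁ : ℂ) (hΩ : ¬(Ω₀ = 0 ∧ Ω₁ = 0))
    (Ω : ℝ) (hΩdef : Ω = Real.sqrt (‖Ω₀‖ ^ 2 + ‖Ω₁‖ ^ 2))
    (a : ℝ) (ha : a = (‖Ω₀‖ ^ 2 - ‖Ω₁‖ ^ 2) / Ω ^ 2)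
    (b : ℂ) (hb : b = 2 * Ω₀ * (starRingEnd ℂ) Ω₁ / ((Ω : ℂ) ^ 2))
    (m : ℕ)
    (t : ℝ) (ht : t = (2 * (m : ℝ) - 1) * Real.pi / Ω) :
    NormedSpace.exp
        ((-(Complex.I * (t : ℂ))) •
          (!![0, 0, Ω₀; 0, 0, Ω₁; (starRingEnd ℂ) Ω₀, (starRingEnd ℂ) Ω₁, 0] :
            Matrix (Fin 3) (Fin 3) ℂ))
      = -!![(a : ℂ), b, 0; (starRingEnd ℂ) b, -(a : ℂ), 0; 0, 0, 1] := by
  have hpos : 0 < ‖Ω₀‖ ^ 2 + ‖Ω₁‖ ^ 2 := by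
    rcases not_and_or.mp hΩ with h | h <;> positivity [norm_pos_iff.mpr h]
  have hΩne : (Ω : ℂ) ≠ 0 := Complex.ofReal_ne_zero.2 (hΩdef ▸ Real.sqrt_pos.2 hpos).ne'
  have hΩsq : (Ω : ℂ) ^ 2 = (‖Ω₀‖ : ℂ) ^ 2 + (‖Ω₁‖ : ℂ) ^ 2 := by
    exact_mod_cast hΩdef ▸ Real.sq_sqrt hpos.le
  have hcube : lambdaHamiltonian Ω₀ Ω₁ ^ 3 = (Ω : ℂ) ^ 2 • lambdaHamiltonian Ω₀ Ω₁ :=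
    hΩsq ▸ lambdaHamiltonian_pow_three Ω₀ Ω₁
  have hphase : -(Complex.I * t) * Ω = -(((2 * (m : ℤ) - 1) * π : ℝ) * Complex.I) := by
    rw [ht]; push_cast; field_simp
  -- `exp` does not depend on the norm; the operator norm only makes the matrices a Banach algebra.
  refine (open scoped Matrix.Norms.Operator in
    exp_smul_of_pow_three_eq_sq_smul (𝔸 := Matrix (Fin 3) (Fin 3) ℂ) hΩne hcube _).trans ?_
  rw [hphase, Complex.sinh_neg, Complex.cosh_neg, Complex.sinh_mul_I, Complex.cosh_mul_I,
    ← Complex.ofReal_sin, ← Complex.ofReal_cos, Real.sin_two_mul_sub_one_mul_pi,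
    Real.cos_two_mul_sub_one_mul_pi, lambdaHamiltonian_sq, lambdaHamiltonian, ha, hb]
  have hΩ₀sq : (‖Ω₀‖ : ℂ) ^ 2 = Ω ^ 2 - (‖Ω₁‖ : ℂ) ^ 2 := by rw [hΩsq]; ring
  ext i j
  fin_cases i <;> fin_cases j <;> simp [hΩ₀sq, map_ofNat] <;> field_simp <;> ring

/-- For a resonantly driven Λ-system with both legs coupled to a common Rydberg state
with Rabi frequencies `Ω₀, Ω₁` (not both zero), `Ω = √(|Ω₀|² + |Ω₁|²)`,
`a = (|Ω₀|² - |Ω₁|²)/Ω²`, `b = 2Ω₀Ω₁*/Ω²`, a pulse of duration `t = (2m-1)π/Ω`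
implements `exp(-itH) = -!![a, b, 0; conj b, -a, 0; 0, 0, 1]`. -/
theorem lambda_system_resonant_evolution (Ω₀ Ω₁ : ℂ) (hΩ : ¬(Ω₀ = 0 ∧ Ω₁ = 0))
    (Ω : ℝ) (hΩdef : Ω = Real.sqrt (‖Ω₀‖ ^ 2 + ‖Ω₁‖ ^ 2))
    (a : ℝ) (ha : a = (‖Ω₀‖ ^ 2 - ‖Ω₁‖ ^ 2) / Ω ^ 2)
    (b : ℂ) (hb : b = 2 * Ω₀ * (starRingEnd ℂ) Ω₁ / ((Ω : ℂ) ^ 2))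
    (m : ℕ) (hm : 1 ≤ m)
    (t : ℝ) (ht : t = (2 * (m : ℝ) - 1) * Real.pi / Ω) :
    NormedSpace.exp
        ((-(Complex.I * (t : ℂ))) •
          (!![0, 0, Ω₀; 0, 0, Ω₁; (starRingEnd ℂ) Ω₀, (starRingEnd ℂ) Ω₁, 0] :
            Matrix (Fin 3) (Fin 3) ℂ))
      = -!![(a : ℂ), b, 0; (starRingEnd ℂ) b, -(a : ℂ), 0; 0, 0, 1] :=
  lambda_system_resonant_evolution_general Ω₀ Ω₁ hΩ Ω hΩdef a ha b hb m t ht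
end
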